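/- Under the standing hypotheses, assume in addition 0 < η < e^{σ}, 1 + ηe^{−σ} < e^{−σ/2}, and σ + u > 0. Let x ∈ ℝ³ with |P_L x| = 1 and 0 < x₃ < 1, let t > 0 satisfy 0 < G₃(s,x) < 1 for s ∈ [0,t) and G₃(t,x) = 1, and let n be the largest integer in [0,t). Then n > (1/(u + log 2))·log(1/x₃) − 1. Moreover, for any r > 0 and any δ* ∈ (0,1) with 1 + (2/σ)·log r < (1/(u + log 2))·log(1/δ*) − 1, if in addition x₃ < δ* then |G(t,x) − e₃| = |P_L G(t,x)| < r. -/

import Mathlib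

noncomputable section
open Real Set

abbrev R3 := EuclideanSpace ℝ (Fin 3)

/-- Orthogonal projection onto `L = ℝe₁ ⊕ ℝe₂`. -/
def PL (x : R3) : R3 := WithLp.toLp 2 fun (i : Fin 3) => if (i : ℕ) = 2 then 0 else x i

/-- Orthogonal projection onto `U = ℝe₃`. -/
def PU (x : R3) : R3 := WithLp.toLp 2 fun (i : Fin 3) => if (i : ℕ) = 2 then x i else 0

/-- The plane `L = ℝe₁ ⊕ ℝe₂`. -/
def Lset : Set R3 := {x | x 2 = 0}

/-- The line `U = ℝe₃`. -/
def Uset : Set R3 := {x | x 0 = 0 ∧ x 1 = 0}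

/-- `B₁ = {x : |P_L x| ≤ 1, |P_U x| ≤ 1}`. -/
def B1 : Set R3 := {x | ‖PL x‖ ≤ 1 ∧ ‖PU x‖ ≤ 1}

/-- The linearized flow `T(t)`. -/
def Tmap (σ μ u t : ℝ) (x : R3) : R3 := WithLp.toLp 2 fun (i : Fin 3) =>
  if (i : ℕ) = 0 then exp (σ * t) * (cos (μ * t) * x 0 + sin (μ * t) * x 1)
  else if (i : ℕ) = 1 then exp (σ * t) * (-(sin (μ * t)) * x 0 + cos (μ * t) * x 1)
  else exp (u * t) * x 2

/-- A C¹ flow on ℝ³. -/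
def IsC1Flow (G : ℝ → R3 → R3) : Prop :=
  ContDiff ℝ 1 (fun p : ℝ × R3 => G p.1 p.2) ∧ (∀ x, G 0 x = x) ∧
    ∀ s t x, G (t + s) x = G t (G s x)

/-- `M` is invariant under the flow `G` in the set `N`. -/
def InvariantIn (G : ℝ → R3 → R3) (M N : Set R3) : Prop :=
  ∀ x ∈ M ∩ N, ∀ I : Set ℝ, (0 : ℝ) ∈ I → I.OrdConnected →
    (∀ t ∈ I, G t x ∈ N) → ∀ t ∈ I, G t x ∈ M

/-- The third basis vector `e₃`. -/
def e3 : R3 := WithLp.toLp 2 fun (i : Fin 3) => if (i : ℕ) = 2 then 1 else 0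

/-!
On the cylinder `B₁` the time-`s` map `G s` differs from the linear map `T(s)` by a map of
Lipschitz constant `η` (mean value theorem). Comparing `y` with its projections `P_L y` and
`P_U y`, whose orbits stay in `L` and `U` by invariance, shows that one unit of time multiplies
the height `|y₃|` by at most `e^u + η < e^{u + log 2}` and the horizontal part `|P_L y|` by at
most `e^σ + η < e^{σ/2}`. Along an orbit that stays in the cylinder until it reaches height `1`
at time `t ∈ (n, n + 1]`, the first bound forces `e^{(u + log 2)(n + 1)} x₃ > 1`, and the second
gives `|P_L G(t, x)| < e^{σ (n - 1) / 2}`, which is smaller than `r` once `n` is large.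
-/

lemma norm_R3_eq (v : R3) : ‖v‖ = √(v 0 ^ 2 + v 1 ^ 2 + v 2 ^ 2) := by
  rw [EuclideanSpace.norm_eq]; simp [Fin.sum_univ_three, sq_abs]

lemma abs_apply_le_norm (v : R3) (i : Fin 3) : |v i| ≤ ‖v‖ := PiLp.norm_apply_le v i

lemma norm_PL (v : R3) : ‖PL v‖ = √(v 0 ^ 2 + v 1 ^ 2) := by
  rw [norm_R3_eq]; simp [PL]

lemma norm_PU (v : R3) : ‖PU v‖ = |v 2| := by
  rw [norm_R3_eq]; simp [PU, sqrt_sq_eq_abs]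

lemma norm_PL_le (v : R3) : ‖PL v‖ ≤ ‖v‖ := by
  rw [norm_PL, norm_R3_eq]; exact sqrt_le_sqrt (by nlinarith [sq_nonneg (v 2)])

lemma sub_PL (v : R3) : v - PL v = PU v := by
  ext i; fin_cases i <;> simp [PL, PU]

lemma sub_PU (v : R3) : v - PU v = PL v := by
  ext i; fin_cases i <;> simp [PL, PU]

lemma isLinearMap_PL : IsLinearMap ℝ PL :=
  ⟨fun a b => by ext i; fin_cases i <;> simp [PL],
   fun c a => by ext i; fin_cases i <;> simp [PL]⟩

lemma isLinearMap_PU : IsLinearMap ℝ PU :=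
  ⟨fun a b => by ext i; fin_cases i <;> simp [PU],
   fun c a => by ext i; fin_cases i <;> simp [PU]⟩

lemma PL_mem_Lset (v : R3) : PL v ∈ Lset := by simp [Lset, PL]

lemma PU_mem_Uset (v : R3) : PU v ∈ Uset := by simp [Uset, PU]

lemma PL_eq_zero_of_mem_Uset {v : R3} (hv : v ∈ Uset) : PL v = 0 := by
  ext i; fin_cases i <;> simp [PL, hv.1, hv.2]

lemma PL_mem_B1 {v : R3} (hv : v ∈ B1) : PL v ∈ B1 := by
  refine ⟨?_, ?_⟩
  · have := hv.1; rw [norm_PL] at this ⊢; simpa [PL] using this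
  · rw [norm_PU]; simp [PL]

lemma PU_mem_B1 {v : R3} (hv : v ∈ B1) : PU v ∈ B1 := by
  refine ⟨?_, ?_⟩
  · rw [norm_PL]; simp [PU]
  · have := hv.2; rw [norm_PU] at this ⊢; simpa [PU] using this

lemma convex_B1 : Convex ℝ B1 := by
  have hB1 : B1 = PL ⁻¹' Metric.closedBall 0 1 ∩ PU ⁻¹' Metric.closedBall 0 1 := by
    ext v; simp [B1]
  rw [hB1]
  exact ((convex_closedBall 0 1).is_linear_preimage isLinearMap_PL).inter
    ((convex_closedBall 0 1).is_linear_preimage isLinearMap_PU)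

lemma sub_e3_eq_PL {v : R3} (hv : v 2 = 1) : v - e3 = PL v := by
  ext i; fin_cases i <;> simp [e3, PL, hv]

lemma isLinearMap_Tmap (σ μ u t : ℝ) : IsLinearMap ℝ (Tmap σ μ u t) :=
  ⟨fun a b => by ext i; fin_cases i <;> simp [Tmap] <;> ring,
   fun c a => by ext i; fin_cases i <;> simp [Tmap] <;> ring⟩

def Tclm (σ μ u t : ℝ) : R3 →L[ℝ] R3 :=
  LinearMap.toContinuousLinearMap ((isLinearMap_Tmap σ μ u t).mk' _)

lemma Tmap_PU_apply_two (σ μ u t : ℝ) (v : R3) : Tmap σ μ u t (PU v) 2 = exp (u * t) * v 2 := by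
  simp [Tmap, PU]

lemma norm_Tmap_PL (σ μ u t : ℝ) (v : R3) :
    ‖Tmap σ μ u t (PL v)‖ = exp (σ * t) * ‖PL v‖ := by
  have hrot : (exp (σ * t) * (cos (μ * t) * v 0 + sin (μ * t) * v 1)) ^ 2 +
      (exp (σ * t) * (-sin (μ * t) * v 0 + cos (μ * t) * v 1)) ^ 2 + 0 ^ 2
      = exp (σ * t) ^ 2 * (v 0 ^ 2 + v 1 ^ 2) := by
    linear_combination exp (σ * t) ^ 2 * (v 0 ^ 2 + v 1 ^ 2) * sin_sq_add_cos_sq (μ * t)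
  rw [norm_R3_eq, norm_PL, ← sqrt_sq (exp_pos (σ * t)).le, ← sqrt_mul (sq_nonneg _)]
  simpa [Tmap, PL] using congrArg sqrt hrot

lemma norm_image_sub_sub_le_of_fderiv_near {E F : Type*} [NormedAddCommGroup E]
    [NormedSpace ℝ E] [NormedAddCommGroup F] [NormedSpace ℝ F] {f : E → F} {φ : E →L[ℝ] F}
    {s : Set E} {η : ℝ} (hs : Convex ℝ s) (hf : Differentiable ℝ f) (hη : 0 ≤ η)
    (hfφ : ∀ x ∈ s, ∀ y, ‖fderiv ℝ f x y - φ y‖ ≤ η * ‖y‖) {x y : E} (hx : x ∈ s)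
    (hy : y ∈ s) : ‖f y - f x - φ (y - x)‖ ≤ η * ‖y - x‖ :=
  hs.norm_image_sub_le_of_norm_fderiv_le' (fun z _ => hf z)
    (fun z hz => ContinuousLinearMap.opNorm_le_bound _ hη (hfφ z hz)) hx hy

section NearLinearMap

variable {σ μ u η s : ℝ} {f : R3 → R3}

lemma abs_apply_two_le_of_near_Tmap (hf : Differentiable ℝ f) (hη : 0 ≤ η)
    (hfT : ∀ x ∈ B1, ∀ y, ‖fderiv ℝ f x y - Tmap σ μ u s y‖ ≤ η * ‖y‖)
    (hL : ∀ y ∈ B1, f (PL y) ∈ Lset) {y : R3} (hy : y ∈ B1) :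
    |f y 2| ≤ (exp (u * s) + η) * |y 2| := by
  have hmvt := norm_image_sub_sub_le_of_fderiv_near (φ := Tclm σ μ u s) convex_B1 hf hη hfT
    (PL_mem_B1 hy) hy
  rw [sub_PL, norm_PU] at hmvt
  have hcoord : (f y - f (PL y) - Tclm σ μ u s (PU y)) 2 = f y 2 - exp (u * s) * y 2 := by
    simp [Tclm, Tmap_PU_apply_two, show f (PL y) 2 = 0 from hL y hy]
  have hdev := (abs_apply_le_norm _ 2).trans hmvt
  rw [hcoord] at hdev
  have htri := abs_sub_abs_le_abs_sub (f y 2) (exp (u * s) * y 2)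
  rw [abs_mul, abs_of_pos (exp_pos _)] at htri
  linarith

lemma norm_PL_le_of_near_Tmap (hf : Differentiable ℝ f) (hη : 0 ≤ η)
    (hfT : ∀ x ∈ B1, ∀ y, ‖fderiv ℝ f x y - Tmap σ μ u s y‖ ≤ η * ‖y‖)
    (hU : ∀ y ∈ B1, f (PU y) ∈ Uset) {y : R3} (hy : y ∈ B1) :
    ‖PL (f y)‖ ≤ (exp (σ * s) + η) * ‖PL y‖ := by
  have hmvt := norm_image_sub_sub_le_of_fderiv_near (φ := Tclm σ μ u s) convex_B1 hf hη hfT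
    (PU_mem_B1 hy) hy
  rw [sub_PU] at hmvt
  set w := f y - f (PU y) - Tclm σ μ u s (PL y)
  have hdecomp : PL (f y) = PL w + PL (Tmap σ μ u s (PL y)) := by
    simp only [w, isLinearMap_PL.map_sub, PL_eq_zero_of_mem_Uset (hU y hy)]
    simp [Tclm]
  calc ‖PL (f y)‖ ≤ ‖w‖ + ‖Tmap σ μ u s (PL y)‖ := by
        rw [hdecomp]; exact (norm_add_le _ _).trans (add_le_add (norm_PL_le _) (norm_PL_le _))
    _ ≤ η * ‖PL y‖ + exp (σ * s) * ‖PL y‖ := by rw [norm_Tmap_PL]; gcongr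
    _ = (exp (σ * s) + η) * ‖PL y‖ := by ring

end NearLinearMap

lemma IsC1Flow.differentiable {G : ℝ → R3 → R3} (hG : IsC1Flow G) (s : ℝ) :
    Differentiable ℝ (G s) := fun y =>
  ((hG.1.differentiable one_ne_zero) (s, y)).comp y
    ((differentiableAt_const s).prodMk differentiableAt_id)

lemma IsC1Flow.apply_nat_succ {G : ℝ → R3 → R3} (hG : IsC1Flow G) (n : ℕ) (x : R3) :
    G (n + 1 : ℕ) x = G 1 (G n x) := by
  rw [← hG.2.2, Nat.cast_succ, add_comm]

lemma InvariantIn.flow_mem {G : ℝ → R3 → R3} {M N : Set R3} (h : InvariantIn G M N)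
    (hG : IsC1Flow G) {y : R3} (hyM : y ∈ M) (hN : ∀ t ∈ Icc (0 : ℝ) 1, G t y ∈ N) {s : ℝ}
    (hs : s ∈ Icc (0 : ℝ) 1) : G s y ∈ M := by
  have hyN : y ∈ N := by simpa [hG.2.1] using hN 0 ⟨le_rfl, zero_le_one⟩
  exact h y ⟨hyM, hyN⟩ (Icc 0 1) ⟨le_rfl, zero_le_one⟩ ordConnected_Icc hN s hs

section FlowNearLinear

variable {σ μ u η : ℝ} {G : ℝ → R3 → R3}

lemma flow_step_bounds (hG : IsC1Flow G) (hη : 0 ≤ η)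
    (hD2 : ∀ t ∈ Icc (0:ℝ) 1, ∀ x ∈ B1, ∀ y : R3,
      ‖fderiv ℝ (G t) x y - Tmap σ μ u t y‖ ≤ η * ‖y‖)
    (hL : ∀ t ∈ Icc (0:ℝ) 1, ∀ y ∈ B1, G t (PL y) ∈ Lset)
    (hU : ∀ t ∈ Icc (0:ℝ) 1, ∀ y ∈ B1, G t (PU y) ∈ Uset)
    {s : ℝ} (hs : s ∈ Icc (0:ℝ) 1) {y : R3} (hy : y ∈ B1) :
    ‖PL (G s y)‖ ≤ (exp (σ * s) + η) * ‖PL y‖ ∧ |G s y 2| ≤ (exp (u * s) + η) * |y 2| :=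
  ⟨norm_PL_le_of_near_Tmap (hG.differentiable s) hη (hD2 s hs) (hU s hs) hy,
   abs_apply_two_le_of_near_Tmap (hG.differentiable s) hη (hD2 s hs) (hL s hs) hy⟩

lemma flow_nat_bounds (hG : IsC1Flow G) (hη : 0 ≤ η)
    (hD2 : ∀ t ∈ Icc (0:ℝ) 1, ∀ x ∈ B1, ∀ y : R3,
      ‖fderiv ℝ (G t) x y - Tmap σ μ u t y‖ ≤ η * ‖y‖)
    (hL : ∀ t ∈ Icc (0:ℝ) 1, ∀ y ∈ B1, G t (PL y) ∈ Lset)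
    (hU : ∀ t ∈ Icc (0:ℝ) 1, ∀ y ∈ B1, G t (PU y) ∈ Uset)
    (hcontr : exp σ + η ≤ 1) {x : R3} (hx : ‖PL x‖ ≤ 1) :
    ∀ n : ℕ, (∀ k < n, |G k x 2| ≤ 1) →
      ‖PL (G n x)‖ ≤ (exp σ + η) ^ n ∧ |G n x 2| ≤ (exp u + η) ^ n * |x 2|
  | 0, _ => by simpa [hG.2.1] using hx
  | n + 1, hvert => by
    obtain ⟨hhor, hheight⟩ := flow_nat_bounds hG hη hD2 hL hU hcontr hx n
      fun k hk => hvert k (Nat.lt_succ_of_lt hk)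
    have hmem : G n x ∈ B1 :=
      ⟨hhor.trans (pow_le_one₀ (by positivity) hcontr), by rw [norm_PU]; exact hvert n n.lt_succ_self⟩
    obtain ⟨hstepPL, hstepU⟩ := flow_step_bounds hG hη hD2 hL hU ⟨zero_le_one, le_rfl⟩ hmem
    rw [mul_one] at hstepPL hstepU
    rw [hG.apply_nat_succ, pow_succ', pow_succ', mul_assoc]
    exact ⟨hstepPL.trans (by gcongr), hstepU.trans (by gcongr)⟩

lemma flow_bounds_of_mem_Ioc (hG : IsC1Flow G) (hη : 0 ≤ η)
    (hD2 : ∀ t ∈ Icc (0:ℝ) 1, ∀ x ∈ B1, ∀ y : R3,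
      ‖fderiv ℝ (G t) x y - Tmap σ μ u t y‖ ≤ η * ‖y‖)
    (hL : ∀ t ∈ Icc (0:ℝ) 1, ∀ y ∈ B1, G t (PL y) ∈ Lset)
    (hU : ∀ t ∈ Icc (0:ℝ) 1, ∀ y ∈ B1, G t (PU y) ∈ Uset)
    (hσ : σ ≤ 0) (hu : 0 ≤ u) (hcontr : exp σ + η ≤ 1) {x : R3} (hx : ‖PL x‖ ≤ 1)
    {t : ℝ} {n : ℕ} (hn1 : (n : ℝ) < t) (hn2 : t ≤ n + 1)
    (hvert : ∀ s ∈ Ico (0 : ℝ) t, |G s x 2| ≤ 1) :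
    ‖PL (G t x)‖ ≤ (1 + η) * (exp σ + η) ^ n ∧
      |G t x 2| ≤ (exp u + η) ^ (n + 1) * |x 2| := by
  have hvert_nat : ∀ k ≤ n, |G k x 2| ≤ 1 := fun k hk =>
    hvert k ⟨k.cast_nonneg, lt_of_le_of_lt (Nat.cast_le.2 hk) hn1⟩
  obtain ⟨hhor, hheight⟩ := flow_nat_bounds hG hη hD2 hL hU hcontr hx n
    fun k hk => hvert_nat k hk.le
  have hmem : G n x ∈ B1 :=
    ⟨hhor.trans (pow_le_one₀ (by positivity) hcontr), by rw [norm_PU]; exact hvert_nat n le_rfl⟩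
  have hs : t - n ∈ Icc (0 : ℝ) 1 := ⟨by linarith, by linarith⟩
  obtain ⟨hstepPL, hstepU⟩ := flow_step_bounds hG hη hD2 hL hU hs hmem
  have ht : G t x = G (t - n) (G n x) := by rw [← hG.2.2, sub_add_cancel]
  have hσs : exp (σ * (t - n)) ≤ 1 := exp_le_one_iff.2 (mul_nonpos_of_nonpos_of_nonneg hσ hs.1)
  have hus : exp (u * (t - n)) ≤ exp u :=
    exp_le_exp.2 (mul_le_of_le_one_right hu hs.2)
  rw [ht, pow_succ', mul_assoc]
  exact ⟨hstepPL.trans (by gcongr), hstepU.trans (by gcongr)⟩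

end FlowNearLinear

lemma nat_gt_of_one_lt_exp_pow_mul {c y : ℝ} {n : ℕ} (hc : 0 < c) (hy : 0 < y)
    (h : 1 < exp c ^ (n + 1) * y) : (n : ℝ) > 1 / c * log (1 / y) - 1 := by
  have hlog : log (1 / y) < (n + 1) * c := by
    rw [← exp_nat_mul] at h
    exact_mod_cast (log_lt_iff_lt_exp (by positivity)).2 ((div_lt_iff₀ hy).2 h)
  rw [gt_iff_lt, sub_lt_iff_lt_add, one_div_mul_eq_div, div_lt_iff₀ hc]
  exact hlog

lemma exp_lt_of_div_mul_log_lt {σ r m : ℝ} (hσ : σ < 0) (hr : 0 < r)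
    (h : 2 / σ * log r < m) : exp (σ * m / 2) < r := by
  have hm : σ * m < 2 * log r := by
    calc σ * m < σ * (2 / σ * log r) := mul_lt_mul_of_neg_left h hσ
      _ = 2 * log r := by have := hσ.ne; field_simp
  rw [← exp_log hr]
  exact exp_lt_exp.2 (by linarith)

lemma exp_add_lt_exp_half {σ η : ℝ} (h : 1 + η * exp (-σ) < exp (-σ / 2)) :
    exp σ + η < exp (σ / 2) := by
  have h' := mul_lt_mul_of_pos_left h (exp_pos σ)
  rwa [mul_add, mul_one, mul_left_comm, ← exp_add, ← exp_add, add_neg_cancel, exp_zero,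
    mul_one, show σ + -σ / 2 = σ / 2 by ring] at h'

theorem statement11_general
    (u σ μ η rB : ℝ) (hu : 0 < u) (hσ : σ < 0) (hη : 0 < η)
    (G : ℝ → R3 → R3) (hG : IsC1Flow G)
    (hD2 : ∀ t ∈ Icc (0:ℝ) 1, ∀ x ∈ B1, ∀ y : R3,
      ‖fderiv ℝ (G t) x y - Tmap σ μ u t y‖ ≤ η * ‖y‖)
    (hGB : ∀ t ∈ Icc (0:ℝ) 1, ∀ x ∈ B1, G t x ∈ Metric.closedBall (0 : R3) rB)
    (hLinv : InvariantIn G Lset (Metric.closedBall 0 rB))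
    (hUinv : InvariantIn G Uset (Metric.closedBall 0 rB))
    (hησ : η < exp σ) (hησ2 : 1 + η * exp (-σ) < exp (-σ / 2))
    (x : R3) (hxcyl : ‖PL x‖ = 1) (hx3pos : 0 < x 2)
    (t : ℝ)
    (htravel : ∀ s ∈ Ico (0 : ℝ) t, 0 < G s x 2 ∧ G s x 2 < 1)
    (hhit : G t x 2 = 1)
    (n : ℕ) (hn1 : (n : ℝ) < t) (hn2 : t ≤ (n : ℝ) + 1) :
    (n : ℝ) > 1 / (u + Real.log 2) * Real.log (1 / x 2) - 1 ∧
    ∀ r > (0 : ℝ), ∀ δstar ∈ Ioo (0 : ℝ) 1,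
      1 + 2 / σ * Real.log r < 1 / (u + Real.log 2) * Real.log (1 / δstar) - 1 →
      x 2 < δstar →
      ‖G t x - e3‖ = ‖PL (G t x)‖ ∧ ‖PL (G t x)‖ < r := by
  have hL : ∀ s ∈ Icc (0:ℝ) 1, ∀ y ∈ B1, G s (PL y) ∈ Lset := fun s hs y hy =>
    hLinv.flow_mem hG (PL_mem_Lset y) (fun τ hτ => hGB τ hτ _ (PL_mem_B1 hy)) hs
  have hU : ∀ s ∈ Icc (0:ℝ) 1, ∀ y ∈ B1, G s (PU y) ∈ Uset := fun s hs y hy =>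
    hUinv.flow_mem hG (PU_mem_Uset y) (fun τ hτ => hGB τ hτ _ (PU_mem_B1 hy)) hs
  have hcontract := exp_add_lt_exp_half hησ2
  have hcontract1 : exp σ + η ≤ 1 := hcontract.le.trans (exp_le_one_iff.2 (by linarith))
  obtain ⟨hhor, hvert⟩ := flow_bounds_of_mem_Ioc hG hη.le hD2 hL hU hσ.le hu.le hcontract1
    hxcyl.le hn1 hn2 fun s hs => abs_le.2 ⟨by linarith [htravel s hs], (htravel s hs).2.le⟩
  have hgrowth : 1 < exp (u + log 2) ^ (n + 1) * x 2 := by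
    have : exp u + η < exp (u + log 2) := by
      rw [exp_add, exp_log two_pos]
      linarith [hησ.trans (exp_lt_exp.2 (hσ.trans hu))]
    calc 1 = |G t x 2| := by rw [hhit, abs_one]
      _ ≤ (exp u + η) ^ (n + 1) * |x 2| := hvert
      _ < exp (u + log 2) ^ (n + 1) * x 2 := by rw [abs_of_pos hx3pos]; gcongr
  have hn := nat_gt_of_one_lt_exp_pow_mul (by positivity) hx3pos hgrowth
  refine ⟨hn, fun r hr δ hδ hrδ hxδ => ⟨by rw [sub_e3_eq_PL hhit], ?_⟩⟩
  have hδx : log (1 / δ) ≤ log (1 / x 2) :=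
    log_le_log (one_div_pos.2 hδ.1) (one_div_le_one_div_of_le hx3pos hxδ.le)
  have hn_r : 2 / σ * log r < n - 1 := by
    have := mul_le_mul_of_nonneg_left hδx (by positivity : 0 ≤ 1 / (u + log 2))
    linarith
  have h1η : 1 + η < exp (-σ / 2) := by
    nlinarith [one_le_exp (show 0 ≤ -σ by linarith)]
  calc ‖PL (G t x)‖ ≤ (1 + η) * (exp σ + η) ^ n := hhor
    _ < exp (-σ / 2) * exp (σ / 2) ^ n :=
        mul_lt_mul h1η (pow_le_pow_left₀ (by positivity) hcontract.le n) (by positivity)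
          (by positivity)
    _ = exp (σ * (n - 1) / 2) := by rw [← exp_nat_mul, ← exp_add]; ring_nf
    _ < r := exp_lt_of_div_mul_log_lt hσ hr hn_r

theorem statement11
    (u σ μ η rB : ℝ) (hu : 0 < u) (hσ : σ < 0) (hμ : 0 < μ) (hη : 0 < η)
    (hB1B : B1 ⊆ Metric.closedBall (0 : R3) rB)
    (G : ℝ → R3 → R3) (hG : IsC1Flow G) (hG0 : ∀ t : ℝ, G t 0 = 0)
    (hD2 : ∀ t ∈ Icc (0:ℝ) 1, ∀ x ∈ B1, ∀ y : R3,
      ‖fderiv ℝ (G t) x y - Tmap σ μ u t y‖ ≤ η * ‖y‖)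
    (hGB : ∀ t ∈ Icc (0:ℝ) 1, ∀ x ∈ B1, G t x ∈ Metric.closedBall (0 : R3) rB)
    (hLinv : InvariantIn G Lset (Metric.closedBall 0 rB))
    (hUinv : InvariantIn G Uset (Metric.closedBall 0 rB))
    (hησ : η < exp σ) (hησ2 : 1 + η * exp (-σ) < exp (-σ / 2)) (hσu : 0 < σ + u)
    (x : R3) (hxcyl : ‖PL x‖ = 1) (hx3pos : 0 < x 2) (hx3lt : x 2 < 1)
    (t : ℝ) (ht : 0 < t)
    (htravel : ∀ s ∈ Ico (0 : ℝ) t, 0 < G s x 2 ∧ G s x 2 < 1)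
    (hhit : G t x 2 = 1)
    (n : ℕ) (hn1 : (n : ℝ) < t) (hn2 : t ≤ (n : ℝ) + 1) :
    (n : ℝ) > 1 / (u + Real.log 2) * Real.log (1 / x 2) - 1 ∧
    ∀ r > (0 : ℝ), ∀ δstar ∈ Ioo (0 : ℝ) 1,
      1 + 2 / σ * Real.log r < 1 / (u + Real.log 2) * Real.log (1 / δstar) - 1 →
      x 2 < δstar →
      ‖G t x - e3‖ = ‖PL (G t x)‖ ∧ ‖PL (G t x)‖ < r :=
  statement11_general u σ μ η rB hu hσ hη G hG hD2 hGB hLinv hUinv hησ hησ2 x hxcyl hx3pos t htravel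
    hhit n hn1 hn2
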